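/- arXiv:cs/0701006 — 3 statements merged into one kernel-verified Lean document; each statement's English description precedes it below -/
import Mathlib

section
/- (Lovász Local Lemma, symmetric form) Let E_1,...,E_N be events in a probability space such that each E_i is mutually independent of all but at most τ of the other events, and P(E_i) ≤ p for all i. If e·p·(τ+1) ≤ 1, then P(⋂_{i=1}^N complement(E_i)) > 0. -/
open MeasureTheory

/-- **Lovász Local Lemma, symmetric form.** If each event `E i` is mutually independent of
all but at most `τ` of the other events (formalized: there is a set `S i` of at most `τ`
indices such that `E i` is independent of every intersection of complements of events
outside `S i ∪ {i}`), `P(E i) ≤ p` for all `i`, and `e·p·(τ+1) ≤ 1`, then the probability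
that none of the events occurs is positive. -/
theorem stmt5 {Ω : Type*} [MeasurableSpace Ω] (μ : Measure Ω) [IsProbabilityMeasure μ]
    (N τ : ℕ) (p : ℝ) (E : Fin N → Set Ω)
    (hmeas : ∀ i, MeasurableSet (E i))
    (hdep : ∀ i : Fin N, ∃ S : Finset (Fin N), i ∉ S ∧ S.card ≤ τ ∧
      ∀ T : Finset (Fin N), (∀ j ∈ T, j ∉ S ∧ j ≠ i) →
        μ (E i ∩ ⋂ j ∈ T, (E j)ᶜ) = μ (E i) * μ (⋂ j ∈ T, (E j)ᶜ))
    (hp : ∀ i, (μ (E i)).toReal ≤ p)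
    (hcond : Real.exp 1 * p * (τ + 1) ≤ 1) :
    0 < μ (⋂ i, (E i)ᶜ) := by
  classical
  rcases Nat.eq_zero_or_pos N with hN | hN
  · subst hN
    have h : (⋂ i : Fin 0, (E i)ᶜ) = Set.univ := by simp
    rw [h]; simp
  have hp0 : 0 ≤ p := le_trans ENNReal.toReal_nonneg (hp ⟨0, hN⟩)
  have hepos : (0:ℝ) < Real.exp 1 := Real.exp_pos 1
  have he2 : (2:ℝ) ≤ Real.exp 1 := by
    have := Real.add_one_le_exp (1:ℝ); linarith
  -- choice of x
  set x : ℝ := if τ = 0 then 2⁻¹ else ((τ:ℝ)+1)⁻¹ with hxdef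
  have hx0 : 0 < x := by
    rw [hxdef]; split_ifs
    · norm_num
    · positivity
  have hx1 : x < 1 := by
    rw [hxdef]; split_ifs with h
    · norm_num
    · have h1 : (1:ℝ) ≤ (τ:ℝ) := by exact_mod_cast Nat.one_le_iff_ne_zero.mpr h
      rw [inv_lt_one_iff₀]
      right; linarith
  -- the key real inequality
  have hxp : p ≤ x * (1-x)^τ := by
    rw [hxdef]; split_ifs with h
    · subst h
      push_cast at hcond
      simp only [pow_zero, mul_one]
      nlinarith
    · have hτ1 : (1:ℝ) ≤ (τ:ℝ) := by exact_mod_cast Nat.one_le_iff_ne_zero.mpr h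
      have hτpos : (0:ℝ) < (τ:ℝ) := by linarith
      have hA : (1 + 1/(τ:ℝ))^τ ≤ Real.exp 1 := by
        have h1 : 1 + 1/(τ:ℝ) ≤ Real.exp (1/(τ:ℝ)) := by
          have := Real.add_one_le_exp (1/(τ:ℝ)); linarith
        have h2 : (1 + 1/(τ:ℝ))^τ ≤ (Real.exp (1/(τ:ℝ)))^τ :=
          pow_le_pow_left₀ (by positivity) h1 τ
        have h3 : (Real.exp (1/(τ:ℝ)))^τ = Real.exp 1 := by
          rw [← Real.exp_nat_mul]
          congr 1
          field_simp
        rw [h3] at h2; exact h2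
      have hApos : (0:ℝ) < (1 + 1/(τ:ℝ))^τ := by positivity
      have hrw : (1 - ((τ:ℝ)+1)⁻¹)^τ = ((1 + 1/(τ:ℝ))^τ)⁻¹ := by
        rw [← inv_pow]
        congr 1
        have hτne : (τ:ℝ) ≠ 0 := ne_of_gt hτpos
        have hτ1ne : (τ:ℝ) + 1 ≠ 0 := by positivity
        field_simp
        ring
      have hmain : p * (((τ:ℝ)+1) * (1 + 1/(τ:ℝ))^τ) ≤ 1 := by
        nlinarith [mul_le_mul_of_nonneg_left hA
          (mul_nonneg hp0 (by positivity : (0:ℝ) ≤ (τ:ℝ)+1))]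
      have hkey : p ≤ 1 / (((τ:ℝ)+1) * (1 + 1/(τ:ℝ))^τ) :=
        (le_div_iff₀ (by positivity)).mpr hmain
      rw [hrw]
      rw [one_div, mul_inv] at hkey
      exact hkey
  -- measurable structure
  have hIm : ∀ T : Finset (Fin N), MeasurableSet (⋂ j ∈ T, (E j)ᶜ) :=
    fun T => Finset.measurableSet_biInter T (fun j _ => (hmeas j).compl)
  have hImono : ∀ {T U : Finset (Fin N)}, T ⊆ U →
      (⋂ j ∈ U, (E j)ᶜ) ⊆ ⋂ j ∈ T, (E j)ᶜ := by
    intro T U h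
    intro a ha
    simp only [Set.mem_iInter] at ha ⊢
    exact fun j hj => ha j (h hj)
  have hsplit : ∀ (j : Fin N) (U : Finset (Fin N)), j ∉ U →
      (μ (⋂ k ∈ insert j U, (E k)ᶜ)).toReal =
        (μ (⋂ k ∈ U, (E k)ᶜ)).toReal - (μ (E j ∩ ⋂ k ∈ U, (E k)ᶜ)).toReal := by
    intro j U hj
    have h1 : μ ((⋂ k ∈ U, (E k)ᶜ) ∩ E j) + μ ((⋂ k ∈ U, (E k)ᶜ) \ E j)
        = μ (⋂ k ∈ U, (E k)ᶜ) := measure_inter_add_diff _ (hmeas j)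
    have h2 : (⋂ k ∈ insert j U, (E k)ᶜ) = (⋂ k ∈ U, (E k)ᶜ) \ E j := by
      rw [Finset.set_biInter_insert, Set.diff_eq, Set.inter_comm]
    have h3 : E j ∩ (⋂ k ∈ U, (E k)ᶜ) = (⋂ k ∈ U, (E k)ᶜ) ∩ E j := Set.inter_comm _ _
    have h4 := congrArg ENNReal.toReal h1
    rw [ENNReal.toReal_add (measure_ne_top μ _) (measure_ne_top μ _)] at h4
    rw [h2, h3]
    linarith
  -- main claim
  have key : ∀ T : Finset (Fin N), ∀ i ∉ T,
      (μ (E i ∩ ⋂ j ∈ T, (E j)ᶜ)).toReal ≤ x * (μ (⋂ j ∈ T, (E j)ᶜ)).toReal := by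
    intro T
    induction T using Finset.strongInduction with
    | _ T ih =>
      intro i hiT
      obtain ⟨S, hiS, hScard, hind⟩ := hdep i
      set T₂ : Finset (Fin N) := T \ S with hT₂def
      have hT₂T : T₂ ⊆ T := Finset.sdiff_subset
      -- peeling
      have peel : ∀ k (U : Finset (Fin N)), T₂ ⊆ U → U ⊆ T → (U \ T₂).card = k →
          (1 - x) ^ k * (μ (⋂ j ∈ T₂, (E j)ᶜ)).toReal ≤ (μ (⋂ j ∈ U, (E j)ᶜ)).toReal := by
        intro k
        induction k with
        | zero =>
          intro U h1 h2 h3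
          have hU : U = T₂ := by
            have he : U \ T₂ = ∅ := Finset.card_eq_zero.mp h3
            apply Finset.Subset.antisymm _ h1
            intro a ha
            by_contra hc
            have : a ∈ U \ T₂ := Finset.mem_sdiff.mpr ⟨ha, hc⟩
            rw [he] at this
            exact absurd this (Finset.notMem_empty a)
          rw [hU]
          simp
        | succ k ihk =>
          intro U h1 h2 h3
          obtain ⟨j, hj⟩ : (U \ T₂).Nonempty := Finset.card_pos.mp (by omega)
          rw [Finset.mem_sdiff] at hj
          obtain ⟨hjU, hjT₂⟩ := hj
          set U' : Finset (Fin N) := U.erase j with hU'def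
          have hjU' : j ∉ U' := Finset.notMem_erase j U
          have hU'T : U' ⊆ T := (Finset.erase_subset _ _).trans h2
          have hT₂U' : T₂ ⊆ U' := fun a ha =>
            Finset.mem_erase.mpr ⟨fun h => hjT₂ (h ▸ ha), h1 ha⟩
          have hcard : (U' \ T₂).card = k := by
            have heq : U' \ T₂ = (U \ T₂).erase j := by
              ext a
              simp only [Finset.mem_sdiff, Finset.mem_erase, hU'def]
              tauto
            rw [heq, Finset.card_erase_of_mem (Finset.mem_sdiff.mpr ⟨hjU, hjT₂⟩)]
            omega
          have hUins : U = insert j U' := (Finset.insert_erase hjU).symm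
          have hss : U' ⊂ T := lt_of_lt_of_le (Finset.erase_ssubset hjU) h2
          have hkey' := ih U' hss j hjU'
          have hihk := ihk U' hT₂U' hU'T hcard
          rw [hUins, hsplit j U' hjU']
          have hmul := mul_le_mul_of_nonneg_left hihk (by linarith : (0:ℝ) ≤ 1 - x)
          have hpows : (1-x)^(k+1) * (μ (⋂ j ∈ T₂, (E j)ᶜ)).toReal
              = (1-x) * ((1-x)^k * (μ (⋂ j ∈ T₂, (E j)ᶜ)).toReal) := by ring
          rw [hpows]
          nlinarith [hkey', hmul]
      have hpeel := peel ((T \ T₂).card) T hT₂T (Finset.Subset.refl T) rfl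
      have hcardle : (T \ T₂).card ≤ τ := by
        have hsub : T \ T₂ ⊆ S := by
          intro a ha
          rw [Finset.mem_sdiff, hT₂def, Finset.mem_sdiff] at ha
          by_contra hc
          exact ha.2 ⟨ha.1, hc⟩
        exact le_trans (Finset.card_le_card hsub) hScard
      have hpow : (1-x)^τ ≤ (1-x)^((T \ T₂).card) :=
        pow_le_pow_of_le_one (by linarith) (by linarith) hcardle
      have hgT : (1-x)^τ * (μ (⋂ j ∈ T₂, (E j)ᶜ)).toReal ≤ (μ (⋂ j ∈ T, (E j)ᶜ)).toReal :=
        le_trans (mul_le_mul_of_nonneg_right hpow ENNReal.toReal_nonneg) hpeel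
      have hnum1 : μ (E i ∩ ⋂ j ∈ T, (E j)ᶜ) ≤ μ (E i ∩ ⋂ j ∈ T₂, (E j)ᶜ) :=
        measure_mono (Set.inter_subset_inter_right _ (hImono hT₂T))
      have hindT₂ : μ (E i ∩ ⋂ j ∈ T₂, (E j)ᶜ) = μ (E i) * μ (⋂ j ∈ T₂, (E j)ᶜ) := by
        apply hind
        intro j hj
        rw [hT₂def, Finset.mem_sdiff] at hj
        exact ⟨hj.2, fun h => hiT (h ▸ hj.1)⟩
      have hnum : (μ (E i ∩ ⋂ j ∈ T, (E j)ᶜ)).toReal ≤ p * (μ (⋂ j ∈ T₂, (E j)ᶜ)).toReal := by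
        calc (μ (E i ∩ ⋂ j ∈ T, (E j)ᶜ)).toReal
            ≤ (μ (E i ∩ ⋂ j ∈ T₂, (E j)ᶜ)).toReal :=
              ENNReal.toReal_mono (measure_ne_top μ _) hnum1
          _ = (μ (E i)).toReal * (μ (⋂ j ∈ T₂, (E j)ᶜ)).toReal := by
              rw [hindT₂, ENNReal.toReal_mul]
          _ ≤ p * (μ (⋂ j ∈ T₂, (E j)ᶜ)).toReal :=
              mul_le_mul_of_nonneg_right (hp i) ENNReal.toReal_nonneg
      have hg2 : (0:ℝ) ≤ (μ (⋂ j ∈ T₂, (E j)ᶜ)).toReal := ENNReal.toReal_nonneg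
      calc (μ (E i ∩ ⋂ j ∈ T, (E j)ᶜ)).toReal
          ≤ p * (μ (⋂ j ∈ T₂, (E j)ᶜ)).toReal := hnum
        _ ≤ (x * (1-x)^τ) * (μ (⋂ j ∈ T₂, (E j)ᶜ)).toReal :=
            mul_le_mul_of_nonneg_right hxp hg2
        _ = x * ((1-x)^τ * (μ (⋂ j ∈ T₂, (E j)ᶜ)).toReal) := by ring
        _ ≤ x * (μ (⋂ j ∈ T, (E j)ᶜ)).toReal :=
            mul_le_mul_of_nonneg_left hgT hx0.le
  -- final peeling
  have final : ∀ U : Finset (Fin N), (1-x)^U.card ≤ (μ (⋂ j ∈ U, (E j)ᶜ)).toReal := by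
    intro U
    induction U using Finset.induction with
    | empty => simp
    | @insert j U hj ihU =>
      rw [hsplit j U hj, Finset.card_insert_of_notMem hj]
      have hk := key U j hj
      have hmul := mul_le_mul_of_nonneg_left ihU (by linarith : (0:ℝ) ≤ 1 - x)
      have hpows : (1-x)^(U.card+1) = (1-x) * (1-x)^U.card := by ring
      rw [hpows]
      nlinarith [hk, hmul]
  have hfin := final Finset.univ
  have huniv : (⋂ j ∈ (Finset.univ : Finset (Fin N)), (E j)ᶜ) = ⋂ i, (E i)ᶜ := by
    simp
  rw [huniv] at hfin
  have hpos : 0 < (μ (⋂ i, (E i)ᶜ)).toReal :=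
    lt_of_lt_of_le (pow_pos (by linarith) _) hfin
  exact (ENNReal.toReal_pos_iff.mp hpos).1
end

section
/- Let v_1,...,v_r ∈ F_2^a be vectors, of which exactly ℓ have odd weight, with 1 ≤ ℓ ≤ r. Then among the C(r,2) pairwise sums v_i + v_j (i < j), exactly ℓ(r-ℓ) have odd weight, and ℓ + ℓ(r-ℓ) = ℓ(r-ℓ+1) ≥ r. Consequently, for an [n,k,d] code with r = n-k and a ≤ d-1, appending to a full-rank parity-check matrix all C(r,2) pairwise sums of its rows yields a matrix with r + C(r,2) = r(r+1)/2 rows in which every restriction to a ≤ d-1 columns has at least r odd-weight rows; hence T_{a,b}(C) ≤ r(r+1)/2 whenever b ≤ r. -/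
open Finset

/-- Hamming weight of a binary vector. -/
def hWt {n : ℕ} (x : Fin n → ZMod 2) : ℕ := (Finset.univ.filter (fun i => x i ≠ 0)).card

/-- `H` is a (possibly redundant) parity-check matrix of `C`. -/
def isPCM {n M : ℕ} (C : Submodule (ZMod 2) (Fin n → ZMod 2))
    (H : Matrix (Fin M) (Fin n) (ZMod 2)) : Prop :=
  ∀ x, x ∈ C ↔ H.mulVec x = 0

/-- Number of odd-weight rows in the restriction of `H` to the columns in `A`. -/
noncomputable def oddRows {M n : ℕ} (H : Matrix (Fin M) (Fin n) (ZMod 2))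
    (A : Finset (Fin n)) : ℕ :=
  Nat.card {i : Fin M // ∑ j ∈ A, H i j = 1}

/-- The `(a,b)` trapping redundancy of `C`. -/
noncomputable def trappingRedundancy {n : ℕ} (C : Submodule (ZMod 2) (Fin n → ZMod 2))
    (a b : ℕ) : ℕ :=
  sInf {M : ℕ | ∃ H : Matrix (Fin M) (Fin n) (ZMod 2), isPCM C H ∧
    ∀ A : Finset (Fin n), A.card = a → ∀ s : ℕ, 1 ≤ s → s < b → oddRows H A ≠ s}

lemma zmod2_add_iff : ∀ x y : ZMod 2, x + y = 1 ↔ (x = 1 ∧ y = 0) ∨ (x = 0 ∧ y = 1) := by decide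

lemma zmod2_cases : ∀ x : ZMod 2, x = 0 ∨ x = 1 := by decide

lemma natCard_subtype {α : Type*} [Fintype α] (p : α → Prop) [DecidablePred p] :
    Nat.card {x // p x} = (univ.filter p).card := by
  simp [Nat.card_eq_fintype_card, Fintype.card_subtype]

lemma pair_count {r : ℕ} (s : Fin r → ZMod 2) :
    (univ.filter fun p : Fin r × Fin r => p.1 < p.2 ∧ s p.1 + s p.2 = 1).card
      = (univ.filter fun i => s i = 1).card * (univ.filter fun i => s i = 0).card := by
  rw [← Finset.card_product]
  apply Finset.card_nbij' (fun p => if s p.1 = 1 then p else p.swap)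
    (fun q => if q.1 < q.2 then q else q.swap)
  · intro p hp
    dsimp only
    rw [mem_coe, mem_filter] at hp
    obtain ⟨-, hlt, hsum⟩ := hp
    rw [mem_coe, Finset.mem_product]
    rcases (zmod2_add_iff _ _).1 hsum with ⟨h1, h2⟩ | ⟨h1, h2⟩
    · rw [if_pos h1]
      exact ⟨mem_filter.2 ⟨mem_univ _, h1⟩, mem_filter.2 ⟨mem_univ _, h2⟩⟩
    · rw [if_neg (by rw [h1]; exact zero_ne_one)]
      exact ⟨mem_filter.2 ⟨mem_univ _, h2⟩, mem_filter.2 ⟨mem_univ _, h1⟩⟩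
  · intro q hq
    dsimp only
    rw [mem_coe, Finset.mem_product, mem_filter, mem_filter] at hq
    obtain ⟨⟨-, h1⟩, -, h2⟩ := hq
    have hne : q.1 ≠ q.2 := fun h => by rw [h, h2] at h1; exact zero_ne_one h1
    rw [mem_coe, mem_filter]
    rcases lt_or_gt_of_ne hne with h | h
    · rw [if_pos h]
      exact ⟨mem_univ _, h, (zmod2_add_iff _ _).2 (Or.inl ⟨h1, h2⟩)⟩
    · rw [if_neg (not_lt.2 h.le)]
      exact ⟨mem_univ _, h, (zmod2_add_iff _ _).2 (Or.inr ⟨h2, h1⟩)⟩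
  · intro p hp
    dsimp only
    rw [mem_coe, mem_filter] at hp
    obtain ⟨-, hlt, hsum⟩ := hp
    by_cases h1 : s p.1 = 1
    · rw [if_pos h1, if_pos hlt]
    · have h2 : s p.2 = 1 := by
        rcases (zmod2_add_iff _ _).1 hsum with ⟨ha, -⟩ | ⟨-, hb⟩
        · exact absurd ha h1
        · exact hb
      rw [if_neg h1]
      rw [if_neg (by simpa using not_lt.2 hlt.le)]
      exact Prod.swap_swap p
  · intro q hq
    dsimp only
    rw [mem_coe, Finset.mem_product, mem_filter, mem_filter] at hq
    obtain ⟨⟨-, h1⟩, -, h2⟩ := hq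
    have hne : q.1 ≠ q.2 := fun h => by rw [h, h2] at h1; exact zero_ne_one h1
    rcases lt_or_gt_of_ne hne with h | h
    · rw [if_pos h, if_pos h1]
    · rw [if_neg (not_lt.2 h.le)]
      rw [if_neg (by simpa using fun hh => zero_ne_one (h2 ▸ hh))]
      exact Prod.swap_swap q

lemma card_even_eq {r : ℕ} (s : Fin r → ZMod 2) :
    (univ.filter fun i => s i = 0).card = r - (univ.filter fun i => s i = 1).card := by
  have h := Finset.card_filter_add_card_filter_not (s := (univ : Finset (Fin r)))
    (p := fun i => s i = 1)
  have he : (univ.filter fun i => ¬ s i = 1) = (univ.filter fun i => s i = 0) := by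
    apply Finset.filter_congr
    intro i _
    rcases zmod2_cases (s i) with hz | hz <;> simp [hz]
  rw [he] at h
  simp only [Finset.card_univ, Fintype.card_fin] at h
  omega

lemma arith_lem (ℓ r : ℕ) (h1 : 1 ≤ ℓ) (h2 : ℓ ≤ r) :
    ℓ + ℓ * (r - ℓ) = ℓ * (r - ℓ + 1) ∧ r ≤ ℓ * (r - ℓ + 1) := by
  obtain ⟨m, rfl⟩ : ∃ m, r = ℓ + m := ⟨r - ℓ, by omega⟩
  have hm : ℓ + m - ℓ = m := by omega
  rw [hm]
  constructor
  · ring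
  · have : m ≤ ℓ * m := Nat.le_mul_of_pos_left m h1
    nlinarith

lemma gauss (r : ℕ) : r + r * (r - 1) / 2 = r * (r + 1) / 2 := by
  have h2 : (r + 1).choose 2 = r + r.choose 2 := by
    rw [Nat.choose_succ_succ, Nat.choose_one_right]
  rw [← Nat.choose_two_right, ← h2, Nat.choose_two_right]
  simp [mul_comm]

lemma sum_range_id_choose (r : ℕ) : ∑ i ∈ Finset.range r, i = r.choose 2 := by
  induction r with
  | zero => rfl
  | succ m ih =>
      rw [Finset.sum_range_succ, ih, Nat.choose_succ_succ m 1, Nat.choose_one_right, add_comm]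

lemma card_pairs (r : ℕ) :
    Nat.card {p : Fin r × Fin r // p.1 < p.2} = r * (r - 1) / 2 := by
  rw [natCard_subtype, ← Nat.choose_two_right]
  have e : {p : Fin r × Fin r // p.1 < p.2} ≃ (j : Fin r) × Fin j.val :=
    { toFun := fun p => ⟨p.1.2, ⟨p.1.1, p.2⟩⟩
      invFun := fun q => ⟨(⟨q.2.1, q.2.2.trans q.1.2⟩, q.1), q.2.2⟩
      left_inv := fun p => rfl
      right_inv := fun q => rfl }
  rw [← Fintype.card_subtype, Fintype.card_congr e]
  simp only [Fintype.card_sigma, Fintype.card_fin]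
  rw [Fin.sum_univ_eq_sum_range (fun i => i) r, sum_range_id_choose]

lemma main_count {r : ℕ} (s : Fin r → ZMod 2) (ℓ : ℕ)
    (hℓ : ℓ = Nat.card {i : Fin r // s i = 1}) (h1 : 1 ≤ ℓ) :
    Nat.card {p : Fin r × Fin r // p.1 < p.2 ∧ s p.1 + s p.2 = 1} = ℓ * (r - ℓ) ∧
    ℓ + ℓ * (r - ℓ) = ℓ * (r - ℓ + 1) ∧ r ≤ ℓ * (r - ℓ + 1) := by
  have hℓf : ℓ = (univ.filter fun i => s i = 1).card := by rw [hℓ, natCard_subtype]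
  have hℓr : ℓ ≤ r := by
    rw [hℓf]
    simpa using Finset.card_filter_le univ (fun i => s i = 1)
  have hc : Nat.card {p : Fin r × Fin r // p.1 < p.2 ∧ s p.1 + s p.2 = 1} = ℓ * (r - ℓ) := by
    rw [natCard_subtype, pair_count, card_even_eq, ← hℓf]
  exact ⟨hc, arith_lem ℓ r h1 hℓr⟩

/-- Among `v_1,…,v_r ∈ F_2^a` with exactly `ℓ ≥ 1` of odd weight, exactly `ℓ(r-ℓ)` of the
pairwise sums `v_i + v_j` (`i < j`) have odd weight, and `ℓ + ℓ(r-ℓ) = ℓ(r-ℓ+1) ≥ r`.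
Consequently, for an `[n,k,d]` code with `r = n-k` and `a ≤ d-1`, appending all pairwise
sums of rows to a full-rank parity-check matrix gives `r(r+1)/2` rows with at least `r`
odd-weight rows in every restriction to `a` columns, so `T_{a,b}(C) ≤ r(r+1)/2` for
`b ≤ r`. -/
theorem stmt12 (n k d a b : ℕ) (C : Submodule (ZMod 2) (Fin n → ZMod 2))
    (hk : Module.finrank (ZMod 2) C = k) (hkn : k ≤ n)
    (hdmin : ∀ x ∈ C, x ≠ 0 → d ≤ hWt x)
    (hdex : ∃ x ∈ C, x ≠ 0 ∧ hWt x = d)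
    (ha1 : 1 ≤ a) (had : a ≤ d - 1) (hb : b ≤ n - k)
    (H : Matrix (Fin (n - k)) (Fin n) (ZMod 2))
    (hH : ∀ x, x ∈ C ↔ H.mulVec x = 0)
    (hfull : LinearIndependent (ZMod 2) (fun i : Fin (n - k) => H i)) :
    (∀ (r : ℕ) (v : Fin r → Fin a → ZMod 2) (ℓ : ℕ),
      ℓ = Nat.card {i : Fin r // ∑ j, v i j = 1} → 1 ≤ ℓ →
        Nat.card {p : Fin r × Fin r // p.1 < p.2 ∧ ∑ j, (v p.1 j + v p.2 j) = 1} =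
          ℓ * (r - ℓ) ∧
        ℓ + ℓ * (r - ℓ) = ℓ * (r - ℓ + 1) ∧ r ≤ ℓ * (r - ℓ + 1)) ∧
    Nat.card (Fin (n - k) ⊕ {p : Fin (n - k) × Fin (n - k) // p.1 < p.2}) =
      (n - k) * (n - k + 1) / 2 ∧
    (∀ A : Finset (Fin n), A.card = a →
      n - k ≤ Nat.card {z : Fin (n - k) ⊕ {p : Fin (n - k) × Fin (n - k) // p.1 < p.2} //
        ∑ j ∈ A, (Sum.elim (fun i => H i)
          (fun p => fun j' => H p.1.1 j' + H p.1.2 j') z) j = 1}) ∧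
    trappingRedundancy C a b ≤ (n - k) * (n - k + 1) / 2 := by
  -- Part 1
  have part1 : ∀ (r' : ℕ) (v : Fin r' → Fin a → ZMod 2) (ℓ : ℕ),
      ℓ = Nat.card {i : Fin r' // ∑ j, v i j = 1} → 1 ≤ ℓ →
        Nat.card {p : Fin r' × Fin r' // p.1 < p.2 ∧ ∑ j, (v p.1 j + v p.2 j) = 1} =
          ℓ * (r' - ℓ) ∧
        ℓ + ℓ * (r' - ℓ) = ℓ * (r' - ℓ + 1) ∧ r' ≤ ℓ * (r' - ℓ + 1) := by
    intro r' v ℓ hℓ h1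
    have key := main_count (fun i => ∑ j, v i j) ℓ hℓ h1
    have hrw : Nat.card {p : Fin r' × Fin r' // p.1 < p.2 ∧ ∑ j, (v p.1 j + v p.2 j) = 1}
        = Nat.card {p : Fin r' × Fin r' // p.1 < p.2 ∧ (∑ j, v p.1 j) + ∑ j, v p.2 j = 1} := by
      apply Nat.card_congr
      apply Equiv.subtypeEquivRight
      intro p
      rw [Finset.sum_add_distrib]
    rw [hrw]
    exact key
  -- Part 2
  have part2 : Nat.card (Fin (n - k) ⊕ {p : Fin (n - k) × Fin (n - k) // p.1 < p.2})
      = (n - k) * (n - k + 1) / 2 := by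
    rw [Nat.card_sum, card_pairs, Nat.card_eq_fintype_card, Fintype.card_fin, gauss]
  -- Part 3
  have part3 : ∀ A : Finset (Fin n), A.card = a →
      n - k ≤ Nat.card {z : Fin (n - k) ⊕ {p : Fin (n - k) × Fin (n - k) // p.1 < p.2} //
        ∑ j ∈ A, (Sum.elim (fun i => H i)
          (fun p => fun j' => H p.1.1 j' + H p.1.2 j') z) j = 1} := by
    intro A hA
    have hnonzero : 1 ≤ Nat.card {i : Fin (n - k) // (∑ j ∈ A, H i j) = 1} := by
      by_contra hcon
      have hempty : ∀ i : Fin (n - k), (∑ j ∈ A, H i j) = 0 := by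
        intro i
        rcases zmod2_cases (∑ j ∈ A, H i j) with hz | hz
        · exact hz
        · exfalso
          haveI : Nonempty {i : Fin (n - k) // (∑ j ∈ A, H i j) = 1} := ⟨⟨i, hz⟩⟩
          have hpos : 0 < Nat.card {i : Fin (n - k) // (∑ j ∈ A, H i j) = 1} := Nat.card_pos
          omega
      have hmv : H.mulVec (fun j => if j ∈ A then (1 : ZMod 2) else 0) = 0 := by
        funext i
        have : H.mulVec (fun j => if j ∈ A then (1 : ZMod 2) else 0) i = ∑ j ∈ A, H i j := by
          simp only [Matrix.mulVec, dotProduct]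
          rw [Finset.sum_congr rfl (fun j _ => by rw [mul_ite, mul_one, mul_zero])]
          rw [Finset.sum_ite_mem, Finset.univ_inter]
        rw [this]
        exact hempty i
      have hxC : (fun j => if j ∈ A then (1 : ZMod 2) else 0) ∈ C := (hH _).2 hmv
      have hAne : A.Nonempty := by
        rw [← Finset.card_pos, hA]; omega
      obtain ⟨j0, hj0⟩ := hAne
      have hxne : (fun j => if j ∈ A then (1 : ZMod 2) else 0) ≠ 0 := by
        intro h0
        have h1 := congrFun h0 j0
        simp [hj0] at h1
      have hwt : hWt (fun j => if j ∈ A then (1 : ZMod 2) else 0) = a := by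
        rw [hWt, ← hA]
        congr 1
        ext j
        by_cases hj : j ∈ A
        · simp [hj]
        · simp [hj]
      have := hdmin _ hxC hxne
      rw [hwt] at this
      omega
    have h1 : Nat.card {i : Fin (n - k) //
        ∑ j ∈ A, (Sum.elim (fun i => H i)
          (fun p : {p : Fin (n - k) × Fin (n - k) // p.1 < p.2} =>
            fun j' => H p.1.1 j' + H p.1.2 j') (Sum.inl i)) j = 1}
        = Nat.card {i : Fin (n - k) // (∑ j ∈ A, H i j) = 1} := by
      apply Nat.card_congr
      exact Equiv.subtypeEquivRight (fun i => by simp)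
    have h2 : Nat.card {q : {p : Fin (n - k) × Fin (n - k) // p.1 < p.2} //
        ∑ j ∈ A, (Sum.elim (fun i => H i)
          (fun p : {p : Fin (n - k) × Fin (n - k) // p.1 < p.2} =>
            fun j' => H p.1.1 j' + H p.1.2 j') (Sum.inr q)) j = 1}
        = Nat.card {p : Fin (n - k) × Fin (n - k) //
            p.1 < p.2 ∧ (∑ j ∈ A, H p.1 j) + (∑ j ∈ A, H p.2 j) = 1} := by
      refine Nat.card_congr
        ⟨fun q => ⟨q.1.1, q.1.2, by
            simpa [Sum.elim_inr, Finset.sum_add_distrib] using q.2⟩,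
         fun p => ⟨⟨p.1, p.2.1⟩, by
            simpa [Sum.elim_inr, Finset.sum_add_distrib] using p.2.2⟩,
         fun q => rfl, fun p => rfl⟩
    rw [Nat.card_congr (Equiv.subtypeSum), Nat.card_sum, h1, h2]
    obtain ⟨hc, heq, hge⟩ := main_count (fun i => ∑ j ∈ A, H i j)
      (Nat.card {i : Fin (n - k) // (∑ j ∈ A, H i j) = 1}) rfl hnonzero
    rw [hc]
    omega
  refine ⟨part1, part2, part3, ?_⟩
  -- Part 4
  apply Nat.sInf_le
  rw [← part2]
  have e : (Fin (n - k) ⊕ {p : Fin (n - k) × Fin (n - k) // p.1 < p.2})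
      ≃ Fin (Nat.card (Fin (n - k) ⊕ {p : Fin (n - k) × Fin (n - k) // p.1 < p.2})) :=
    Fintype.equivFinOfCardEq Nat.card_eq_fintype_card.symm
  set G : (Fin (n - k) ⊕ {p : Fin (n - k) × Fin (n - k) // p.1 < p.2}) → Fin n → ZMod 2 :=
    Sum.elim (fun i => H i) (fun p => fun j' => H p.1.1 j' + H p.1.2 j') with hG
  refine ⟨fun m j => G (e.symm m) j, ?_, ?_⟩
  · -- isPCM
    intro x
    rw [hH x]
    constructor
    · intro h0
      funext m
      have hz : ∀ z, ∑ j, G z j * x j = 0 := by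
        intro z
        rcases z with i | p
        · have := congrFun h0 i
          simpa [hG, Matrix.mulVec, dotProduct] using this
        · have hp1 := congrFun h0 p.1.1
          have hp2 := congrFun h0 p.1.2
          simp only [Matrix.mulVec, dotProduct, Pi.zero_apply] at hp1 hp2
          simp only [hG, Sum.elim_inr, add_mul, Finset.sum_add_distrib]
          rw [hp1, hp2, add_zero]
      exact hz (e.symm m)
    · intro h0
      funext i
      have := congrFun h0 (e (Sum.inl i))
      simp only [Matrix.mulVec, dotProduct, Equiv.symm_apply_apply] at this ⊢
      simpa [hG] using this
  · -- no small trapping sets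
    intro A hA ss hs1 hs2 hne
    have h3 := part3 A hA
    have hcongr : oddRows (fun m j => G (e.symm m) j) A
        = Nat.card {z // ∑ j ∈ A, G z j = 1} := by
      apply Nat.card_congr
      exact Equiv.subtypeEquiv e.symm (fun m => Iff.rfl)
    rw [hne] at hcongr
    rw [hG] at hcongr
    have : n - k ≤ ss := le_trans h3 (le_of_eq hcongr.symm)
    omega
end

section
/- Let H be the line-point incidence matrix of PG(2,q), viewed as a parity-check matrix (rows indexed by lines, columns by points). Then a set of s ≥ 3 points forms an elementary trapping set of H if and only if it is an s-arc, and in that case its parameters are (s, s(q+2-s)). Consequently every elementary trapping set of size s ≥ 3 of the type-I PG(2,q) code has exactly s(q+2-s) odd-weight (weight-one) rows in its restriction. -/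
open scoped Classical

/-- No three of the points of `K` in the projective space `ℙ(F, V)` are collinear. -/
def NoThreeCollinear {F V : Type*} [Field F] [AddCommGroup V] [Module F V]
    (K : Set (Projectivization F V)) : Prop :=
  ∀ p₁ ∈ K, ∀ p₂ ∈ K, ∀ p₃ ∈ K, p₁ ≠ p₂ → p₁ ≠ p₃ → p₂ ≠ p₃ →
    ¬ ∃ W : Submodule F V, Module.finrank F W = 2 ∧
      p₁.submodule ≤ W ∧ p₂.submodule ≤ W ∧ p₃.submodule ≤ W

/-- The line–point incidence matrix of `PG(2,q)`, rows indexed by lines (2-dimensional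
subspaces) and columns by points. -/
noncomputable def incMat (F : Type*) [Field F]
    (W : {W : Submodule F (Fin 3 → F) // Module.finrank F W = 2})
    (p : Projectivization F (Fin 3 → F)) : ZMod 2 :=
  if p.submodule ≤ W.1 then 1 else 0


open Module Projectivization

instance projFinite (F V : Type*) [Field F] [AddCommGroup V] [Module F V] [Finite V] :
    Finite (Projectivization F V) :=
  Quotient.finite _

instance submodFinite (F V : Type*) [Field F] [AddCommGroup V] [Module F V] [Finite V] :
    Finite (Submodule F V) :=
  Finite.of_injective _ SetLike.coe_injective

/-- Cardinality of the projectivization of a 2-dimensional space over a finite field. -/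
lemma card_proj_two {F : Type*} [Field F] [Fintype F] {V : Type*} [AddCommGroup V] [Module F V]
    [FiniteDimensional F V] (h2 : Module.finrank F V = 2) :
    Nat.card (Projectivization F V) = Fintype.card F + 1 := by
  have e1 : (Fin 2 → F) ≃ₗ[F] V := LinearEquiv.ofFinrankEq _ _ (by simp [h2])
  have e2 : Projectivization F (Fin 2 → F) ≃ Projectivization F V :=
    { toFun := map e1.toLinearMap e1.injective
      invFun := map e1.symm.toLinearMap e1.symm.injective
      left_inv := fun p => by
        induction p with
        | h v hv =>
          rw [map_mk, map_mk]
          exact (mk_eq_mk_iff' F _ _ _ hv).2 ⟨1, by simp⟩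
      right_inv := fun p => by
        induction p with
        | h v hv =>
          rw [map_mk, map_mk]
          exact (mk_eq_mk_iff' F _ _ _ hv).2 ⟨1, by simp⟩ }
  have e3 := (OnePoint.equivProjectivization F).trans e2
  rw [← Nat.card_congr e3]
  have h4 : Nat.card (OnePoint F) = Nat.card (Option F) := rfl
  rw [h4, Nat.card_eq_fintype_card, Fintype.card_option]

/-- Points of the projectivization lying on a subspace `W` biject with `ℙ F W`. -/
noncomputable def pointsOnEquiv {F : Type*} [Field F] {V : Type*} [AddCommGroup V] [Module F V]
    (W : Submodule F V) :
    {p : Projectivization F V // p.submodule ≤ W} ≃ Projectivization F W := by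
  refine (Equiv.trans ?_ (equivSubmodule F W).symm)
  refine
    { toFun := fun p => ⟨Submodule.comap W.subtype p.1.submodule,
        ((Submodule.comapSubtypeEquivOfLe p.2).finrank_eq).trans p.1.finrank_submodule⟩
      invFun := fun H => ⟨mk'' (H.1.map W.subtype)
          (by rw [Submodule.finrank_map_subtype_eq]; exact H.2), by
        rw [submodule_mk'']; exact Submodule.map_subtype_le W H.1⟩
      left_inv := fun p => ?_
      right_inv := fun H => ?_ }
  · apply Subtype.ext
    have : Submodule.map W.subtype (Submodule.comap W.subtype p.1.submodule) = p.1.submodule := by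
      rw [Submodule.map_comap_subtype, inf_eq_right.2 p.2]
    exact submodule_injective (by rw [submodule_mk'', this])
  · apply Subtype.ext
    dsimp only
    rw [submodule_mk'', Submodule.comap_map_eq_of_injective W.injective_subtype]

lemma card_points_on_line {F : Type*} [Field F] [Fintype F] {V : Type*} [AddCommGroup V]
    [Module F V] [FiniteDimensional F V] (W : Submodule F V) (h2 : Module.finrank F W = 2) :
    Nat.card {p : Projectivization F V // p.submodule ≤ W} = Fintype.card F + 1 := by
  rw [Nat.card_congr (pointsOnEquiv W), card_proj_two h2]

lemma finrank_comap_mkQ {F V : Type*} [Field F] [AddCommGroup V] [Module F V]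
    [FiniteDimensional F V] (p : Submodule F V) (H : Submodule F (V ⧸ p)) :
    Module.finrank F (Submodule.comap p.mkQ H) = Module.finrank F H + Module.finrank F p := by
  set K := Submodule.comap p.mkQ H with hK
  have hpK : p ≤ K := by
    intro x hx
    simp only [hK, Submodule.mem_comap, Submodule.mkQ_apply]
    rw [(Submodule.Quotient.mk_eq_zero p).2 hx]
    exact H.zero_mem
  let g : K →ₗ[F] V ⧸ p := p.mkQ.comp K.subtype
  have hrange : LinearMap.range g = H := by
    rw [LinearMap.range_comp, Submodule.range_subtype]
    exact Submodule.map_comap_eq_self (by rw [Submodule.range_mkQ]; exact le_top)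
  have hker : LinearMap.ker g = Submodule.comap K.subtype p := by
    rw [LinearMap.ker_comp, Submodule.ker_mkQ]
  have h1 := LinearMap.finrank_range_add_finrank_ker g
  rw [hrange, hker, (Submodule.comapSubtypeEquivOfLe hpK).finrank_eq] at h1
  exact h1.symm

lemma card_lines_through {F : Type*} [Field F] [Fintype F]
    (p : Projectivization F (Fin 3 → F)) :
    Nat.card {W : {W : Submodule F (Fin 3 → F) // Module.finrank F W = 2} //
      p.submodule ≤ W.1} = Fintype.card F + 1 := by
  have hfr : Module.finrank F ((Fin 3 → F) ⧸ p.submodule) = 2 := by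
    have := Submodule.finrank_quotient_add_finrank p.submodule
    rw [p.finrank_submodule] at this
    simp only [Module.finrank_fin_fun] at this
    omega
  have e1 : {W : {W : Submodule F (Fin 3 → F) // Module.finrank F W = 2} // p.submodule ≤ W.1}
      ≃ {H : Submodule F ((Fin 3 → F) ⧸ p.submodule) // Module.finrank F H = 1} :=
    { toFun := fun W => ⟨Submodule.map p.submodule.mkQ W.1.1, by
        have hle : p.submodule ≤ W.1.1 := W.2
        have hc : Submodule.comap p.submodule.mkQ (Submodule.map p.submodule.mkQ W.1.1)
            = W.1.1 := by
          rw [Submodule.comap_map_mkQ, sup_eq_right.2 hle]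
        have := finrank_comap_mkQ p.submodule (Submodule.map p.submodule.mkQ W.1.1)
        rw [hc, W.1.2, p.finrank_submodule] at this
        omega⟩
      invFun := fun H => ⟨⟨Submodule.comap p.submodule.mkQ H.1, by
          rw [finrank_comap_mkQ, H.2, p.finrank_submodule]⟩, by
        intro x hx
        simp only [Submodule.mem_comap, Submodule.mkQ_apply]
        rw [(Submodule.Quotient.mk_eq_zero p.submodule).2 hx]
        exact H.1.zero_mem⟩
      left_inv := fun W => by
        apply Subtype.ext; apply Subtype.ext
        dsimp only
        rw [Submodule.comap_map_mkQ, sup_eq_right.2 (W.2 : p.submodule ≤ W.1.1)]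
      right_inv := fun H => by
        apply Subtype.ext
        exact Submodule.map_comap_eq_self (by rw [Submodule.range_mkQ]; exact le_top) }
  rw [Nat.card_congr e1, Nat.card_congr (equivSubmodule F _).symm, card_proj_two hfr]

lemma finrank_sup_two {F : Type*} [Field F] {V : Type*} [AddCommGroup V] [Module F V]
    [FiniteDimensional F V] {p₁ p₂ : Projectivization F V} (h : p₁ ≠ p₂) :
    Module.finrank F ↥(p₁.submodule ⊔ p₂.submodule) = 2 := by
  have hne : p₁.submodule ≠ p₂.submodule := fun h' => h (submodule_injective h')
  have hinf : p₁.submodule ⊓ p₂.submodule = ⊥ := by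
    by_contra hbot
    have h0 : Module.finrank F ↥(p₁.submodule ⊓ p₂.submodule) ≠ 0 := by
      exact fun h0 => hbot (Submodule.finrank_eq_zero.mp h0)
    have h1 : Module.finrank F ↥(p₁.submodule ⊓ p₂.submodule) ≤ 1 := by
      rw [← p₁.finrank_submodule]; exact Submodule.finrank_mono inf_le_left
    have heq1 : p₁.submodule ⊓ p₂.submodule = p₁.submodule :=
      Submodule.eq_of_le_of_finrank_eq inf_le_left (by rw [p₁.finrank_submodule]; omega)
    have heq2 : p₁.submodule ⊓ p₂.submodule = p₂.submodule :=
      Submodule.eq_of_le_of_finrank_eq inf_le_right (by rw [p₂.finrank_submodule]; omega)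
    exact hne (heq1 ▸ heq2)
  have := Submodule.finrank_sup_add_finrank_inf_eq p₁.submodule p₂.submodule
  rw [hinf, p₁.finrank_submodule, p₂.finrank_submodule, finrank_bot] at this
  omega

lemma line_unique {F : Type*} [Field F] {V : Type*} [AddCommGroup V] [Module F V]
    [FiniteDimensional F V] {p₁ p₂ : Projectivization F V} (h : p₁ ≠ p₂)
    {W : Submodule F V} (hW : Module.finrank F W = 2)
    (h₁ : p₁.submodule ≤ W) (h₂ : p₂.submodule ≤ W) :
    p₁.submodule ⊔ p₂.submodule = W :=
  Submodule.eq_of_le_of_finrank_eq (sup_le h₁ h₂) (by rw [finrank_sup_two h, hW])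

lemma card_secants {F : Type*} [Field F] [Fintype F]
    (S : Set (Projectivization F (Fin 3 → F))) (hN : NoThreeCollinear S)
    {p : Projectivization F (Fin 3 → F)} (hp : p ∈ S) :
    Nat.card {W : {W : Submodule F (Fin 3 → F) // Module.finrank F W = 2} //
      p.submodule ≤ W.1 ∧ ∃ p', p' ∈ S ∧ p' ≠ p ∧ p'.submodule ≤ W.1}
      = Nat.card S - 1 := by
  have e : {p' : Projectivization F (Fin 3 → F) // p' ∈ S ∧ p' ≠ p} ≃
      {W : {W : Submodule F (Fin 3 → F) // Module.finrank F W = 2} //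
        p.submodule ≤ W.1 ∧ ∃ p', p' ∈ S ∧ p' ≠ p ∧ p'.submodule ≤ W.1} := by
    refine Equiv.ofBijective
      (fun p' => ⟨⟨p.submodule ⊔ p'.1.submodule, finrank_sup_two (Ne.symm p'.2.2)⟩,
        le_sup_left, p'.1, p'.2.1, p'.2.2, le_sup_right⟩) ⟨?_, ?_⟩
    · rintro a b hab
      have hW : p.submodule ⊔ a.1.submodule = p.submodule ⊔ b.1.submodule :=
        congrArg (fun x => x.1.1) hab
      by_contra hne
      have hab' : a.1 ≠ b.1 := fun h => hne (Subtype.ext h)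
      exact hN p hp a.1 a.2.1 b.1 b.2.1 (Ne.symm a.2.2) (Ne.symm b.2.2) hab'
        ⟨p.submodule ⊔ a.1.submodule, finrank_sup_two (Ne.symm a.2.2),
          le_sup_left, le_sup_right, hW ▸ le_sup_right⟩
    · rintro ⟨⟨W, hW2⟩, hpW, p', hS, hne, hp'W⟩
      refine ⟨⟨p', hS, hne⟩, ?_⟩
      apply Subtype.ext
      apply Subtype.ext
      exact line_unique (Ne.symm hne) hW2 hpW hp'W
  rw [← Nat.card_congr e]
  have e2 : {p' : Projectivization F (Fin 3 → F) // p' ∈ S ∧ p' ≠ p} ≃ ↥(S \ {p}) :=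
    Equiv.subtypeEquivRight (fun p' => by simp [Set.mem_diff])
  rw [Nat.card_congr e2, Nat.card_coe_set_eq, Nat.card_coe_set_eq,
    Set.ncard_diff_singleton_of_mem hp]

lemma card_unisecants_at {F : Type*} [Field F] [Fintype F]
    (S : Set (Projectivization F (Fin 3 → F))) (hN : NoThreeCollinear S)
    (hS1 : 1 ≤ Nat.card S)
    {p : Projectivization F (Fin 3 → F)} (hp : p ∈ S) :
    Nat.card {W : {W : Submodule F (Fin 3 → F) // Module.finrank F W = 2} //
      p.submodule ≤ W.1 ∧ ¬ ∃ p', p' ∈ S ∧ p' ≠ p ∧ p'.submodule ≤ W.1}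
      = (Fintype.card F + 2) - Nat.card S := by
  set M : {W : Submodule F (Fin 3 → F) // Module.finrank F W = 2} → Prop :=
    fun W => ∃ p', p' ∈ S ∧ p' ≠ p ∧ p'.submodule ≤ W.1 with hM
  have esum : ({W : {W : Submodule F (Fin 3 → F) // Module.finrank F W = 2} //
        p.submodule ≤ W.1 ∧ M W} ⊕
      {W : {W : Submodule F (Fin 3 → F) // Module.finrank F W = 2} //
        p.submodule ≤ W.1 ∧ ¬ M W}) ≃
      {W : {W : Submodule F (Fin 3 → F) // Module.finrank F W = 2} // p.submodule ≤ W.1} :=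
    (Equiv.sumCongr (Equiv.subtypeSubtypeEquivSubtypeInter _ (fun W => M W)).symm
      (Equiv.subtypeSubtypeEquivSubtypeInter _ (fun W => ¬ M W)).symm).trans
      (Equiv.sumCompl _)
  have hcards := (Nat.card_sum).symm.trans (Nat.card_congr esum)
  rw [card_lines_through, card_secants S hN hp] at hcards
  show Nat.card {W : {W : Submodule F (Fin 3 → F) // Module.finrank F W = 2} //
      p.submodule ≤ W.1 ∧ ¬ M W} = (Fintype.card F + 2) - Nat.card S
  omega

lemma three_le_card {α : Type*} [Finite α] (a b c : α)
    (hab : a ≠ b) (hac : a ≠ c) (hbc : b ≠ c) : 3 ≤ Nat.card α := by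
  haveI := Fintype.ofFinite α
  rw [Nat.card_eq_fintype_card]
  have h3 : ({a, b, c} : Finset α).card = 3 := by
    rw [Finset.card_insert_of_notMem (by simp [hab, hac]),
      Finset.card_insert_of_notMem (by simp [hbc]), Finset.card_singleton]
  calc 3 = ({a, b, c} : Finset α).card := h3.symm
    _ ≤ _ := Finset.card_le_univ _

lemma exists_three {α : Type*} [Finite α] (h : 3 ≤ Nat.card α) :
    ∃ a b c : α, a ≠ b ∧ a ≠ c ∧ b ≠ c := by
  haveI := Fintype.ofFinite α
  rw [Nat.card_eq_fintype_card] at h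
  obtain ⟨a, b, hab⟩ := Fintype.exists_pair_of_one_lt_card (α := α) (by omega)
  have hcard : (Finset.univ \ {a, b} : Finset α).Nonempty := by
    rw [← Finset.card_pos, Finset.card_sdiff_of_subset (Finset.subset_univ _), Finset.card_univ]
    have h2 : ({a, b} : Finset α).card = 2 := by
      rw [Finset.card_insert_of_notMem (by simp [hab]), Finset.card_singleton]
    omega
  obtain ⟨c, hc⟩ := hcard
  simp only [Finset.mem_sdiff, Finset.mem_univ, Finset.mem_insert,
    Finset.mem_singleton, true_and, not_or] at hc
  exact ⟨a, b, c, hab, fun h => hc.1 h.symm, fun h => hc.2 h.symm⟩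

/-- A set `S` of `s ≥ 3` points of `PG(2,q)` is an elementary trapping set of the
line–point incidence matrix (every restricted row has weight at most two) if and only if
it is an `s`-arc, and in that case the number of weight-one restricted rows is
`s(q+2-s)`. -/
theorem stmt17 (F : Type*) [Field F] [Fintype F] (q s : ℕ) (hq : Fintype.card F = q)
    (S : Set (Projectivization F (Fin 3 → F))) (hs : Nat.card S = s) (hs3 : 3 ≤ s) :
    ((∀ W : {W : Submodule F (Fin 3 → F) // Module.finrank F W = 2},
        Nat.card {p : Projectivization F (Fin 3 → F) // p ∈ S ∧ incMat F W p ≠ 0} ≤ 2) ↔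
      NoThreeCollinear S) ∧
    (NoThreeCollinear S →
      Nat.card {W : {W : Submodule F (Fin 3 → F) // Module.finrank F W = 2} //
          Nat.card {p : Projectivization F (Fin 3 → F) // p ∈ S ∧ incMat F W p ≠ 0} = 1} =
        s * (q + 2 - s)) := by
  have hinc : ∀ (W : {W : Submodule F (Fin 3 → F) // Module.finrank F W = 2})
      (p : Projectivization F (Fin 3 → F)), (incMat F W p ≠ 0) ↔ p.submodule ≤ W.1 := by
    intro W p
    unfold incMat
    split <;> simp_all
  have hcardW : ∀ W : {W : Submodule F (Fin 3 → F) // Module.finrank F W = 2},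
      Nat.card {p : Projectivization F (Fin 3 → F) // p ∈ S ∧ incMat F W p ≠ 0}
      = Nat.card {p : Projectivization F (Fin 3 → F) // p ∈ S ∧ p.submodule ≤ W.1} :=
    fun W => Nat.card_congr (Equiv.subtypeEquivRight fun p => and_congr_right fun _ => hinc W p)
  constructor
  · constructor
    · rintro h p₁ h₁ p₂ h₂ p₃ h₃ h12 h13 h23 ⟨W, hW2, hle1, hle2, hle3⟩
      have hle := h ⟨W, hW2⟩
      rw [hcardW] at hle
      have h3 := three_le_card
        (α := {p : Projectivization F (Fin 3 → F) // p ∈ S ∧ p.submodule ≤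
          (⟨W, hW2⟩ : {W : Submodule F (Fin 3 → F) // Module.finrank F W = 2}).1})
        ⟨p₁, h₁, hle1⟩ ⟨p₂, h₂, hle2⟩ ⟨p₃, h₃, hle3⟩
        (fun h' => h12 (congrArg Subtype.val h'))
        (fun h' => h13 (congrArg Subtype.val h'))
        (fun h' => h23 (congrArg Subtype.val h'))
      omega
    · intro hN W
      rw [hcardW]
      by_contra hgt
      push_neg at hgt
      obtain ⟨a, b, c, hab, hac, hbc⟩ := exists_three (α :=
        {p : Projectivization F (Fin 3 → F) // p ∈ S ∧ p.submodule ≤ W.1}) (by omega)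
      exact hN a.1 a.2.1 b.1 b.2.1 c.1 c.2.1
        (fun h => hab (Subtype.ext h)) (fun h => hac (Subtype.ext h))
        (fun h => hbc (Subtype.ext h)) ⟨W.1, W.2, a.2.2, b.2.2, c.2.2⟩
  · intro hN
    have hS1 : 1 ≤ Nat.card S := by omega
    let T : ↥S → Type _ := fun p =>
      {W : {W : Submodule F (Fin 3 → F) // Module.finrank F W = 2} //
        p.1.submodule ≤ W.1 ∧ ¬ ∃ p', p' ∈ S ∧ p' ≠ p.1 ∧ p'.submodule ≤ W.1}
    have key : ∀ (p : ↥S) (W : {W : Submodule F (Fin 3 → F) // Module.finrank F W = 2}),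
        p.1.submodule ≤ W.1 →
        (¬ ∃ p', p' ∈ S ∧ p' ≠ p.1 ∧ p'.submodule ≤ W.1) →
        Nat.card {pt : Projectivization F (Fin 3 → F) //
          pt ∈ S ∧ pt.submodule ≤ W.1} = 1 := by
      intro p W hpW honly
      rw [Nat.card_eq_one_iff_unique]
      refine ⟨⟨fun a b => ?_⟩, ⟨⟨p.1, p.2, hpW⟩⟩⟩
      have ha : a.1 = p.1 := by
        by_contra hne
        exact honly ⟨a.1, a.2.1, hne, a.2.2⟩
      have hb : b.1 = p.1 := by
        by_contra hne
        exact honly ⟨b.1, b.2.1, hne, b.2.2⟩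
      exact Subtype.ext (ha.trans hb.symm)
    let g : (Σ p : ↥S, T p) →
        {W : {W : Submodule F (Fin 3 → F) // Module.finrank F W = 2} //
          Nat.card {pt : Projectivization F (Fin 3 → F) //
            pt ∈ S ∧ pt.submodule ≤ W.1} = 1} :=
      fun x => ⟨x.2.1, key x.1 x.2.1 x.2.2.1 x.2.2.2⟩
    have hgbij : Function.Bijective g := by
      constructor
      · rintro ⟨p, W, hpW, honly⟩ ⟨p', W', hpW', honly'⟩ hg
        have hWW' : W = W' := congrArg Subtype.val hg
        subst hWW'
        have hpp' : p = p' := by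
          apply Subtype.ext
          by_contra hne
          exact honly' ⟨p.1, p.2, hne, hpW⟩
        subst hpp'
        rfl
      · rintro ⟨W, hW1⟩
        rw [Nat.card_eq_one_iff_unique] at hW1
        obtain ⟨hsub, ⟨a⟩⟩ := hW1
        refine ⟨⟨⟨a.1, a.2.1⟩, W, a.2.2, ?_⟩, rfl⟩
        rintro ⟨p', hS', hne', hle'⟩
        exact hne' (congrArg Subtype.val (@Subsingleton.elim _ hsub ⟨p', hS', hle'⟩ a))
    have egoal : {W : {W : Submodule F (Fin 3 → F) // Module.finrank F W = 2} //
          Nat.card {pt : Projectivization F (Fin 3 → F) //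
            pt ∈ S ∧ incMat F W pt ≠ 0} = 1} ≃
        {W : {W : Submodule F (Fin 3 → F) // Module.finrank F W = 2} //
          Nat.card {pt : Projectivization F (Fin 3 → F) //
            pt ∈ S ∧ pt.submodule ≤ W.1} = 1} :=
      Equiv.subtypeEquivRight (fun W => by rw [hcardW])
    rw [Nat.card_congr egoal, ← Nat.card_congr (Equiv.ofBijective g hgbij)]
    haveI : Fintype ↥S := Fintype.ofFinite _
    haveI : ∀ p : ↥S, Fintype (T p) := fun p => Fintype.ofFinite _
    rw [Nat.card_eq_fintype_card, Fintype.card_sigma]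
    have hTcard : ∀ p : ↥S, Fintype.card (T p) = q + 2 - s := by
      intro p
      rw [← Nat.card_eq_fintype_card]
      have h := card_unisecants_at S hN hS1 p.2
      rw [hq, hs] at h
      exact h
    rw [Finset.sum_congr rfl (fun p _ => hTcard p), Finset.sum_const, Finset.card_univ,
      ← Nat.card_eq_fintype_card, hs, smul_eq_mul]
end
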